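/- arXiv:1912.00508 — 4 statements merged into one kernel-verified Lean document; each statement's English description precedes it below -/
import Mathlib

section
/- Let N, d, m be natural numbers, let Ω be a real N×d matrix, Z a real N×m matrix, and y ∈ ℝ^N. Define M = I_m + Zᵀ Z, B = Ωᵀ Z, H = I_d + Ωᵀ Ω − B M⁻¹ Bᵀ, and u = Ωᵀ y − B M⁻¹ Zᵀ y. Then M and H are positive definite (hence invertible), and the vectors θ̂ = H⁻¹ u and β̂ = M⁻¹ (Zᵀ y − Bᵀ θ̂) satisfy (I_{d+m} + Φᵀ Φ) · (θ̂, β̂) = Φᵀ y, where Φ is the N×(d+m) matrix whose first d columns are Ω and whose last m columns are Z; equivalently, (θ̂, β̂) is the ridge-regression estimator (I_{d+m} + Φᵀ Φ)⁻¹ Φᵀ y. -/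
open Matrix

/-!
The Gram matrix `1 + Φᵀ Φ` of the stacked features is the block matrix
`[[1 + ΩᵀΩ, B], [Bᵀ, M]]`, which is positive definite. Positive definiteness passes to the block
`M` and to its Schur complement `H`, and the hybrid estimator is exactly block Gaussian
elimination of the normal equations: solve the Schur-complement system for `θ̂`, then
back-substitute for `β̂`.
-/

namespace Matrix

variable {l m n R : Type*}

theorem posDef_one_add_conjTranspose_mul_self [Fintype m] [Fintype n] [CommRing R]
    [PartialOrder R] [StarRing R] [StarOrderedRing R] [NoZeroDivisors R] [DecidableEq n]
    (A : Matrix m n R) : (1 + Aᴴ * A).PosDef :=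
  PosDef.one.add_posSemidef (posSemidef_conjTranspose_mul_self A)

theorem one_add_transpose_fromCols_mul_fromCols [Fintype l] [CommRing R] [DecidableEq m]
    [DecidableEq n] (A : Matrix l m R) (C : Matrix l n R) :
    1 + (fromCols A C)ᵀ * fromCols A C =
      fromBlocks (1 + Aᵀ * A) (Aᵀ * C) (Aᵀ * C)ᵀ (1 + Cᵀ * C) := by
  rw [transpose_fromCols, fromRows_mul_fromCols, ← fromBlocks_one, fromBlocks_add,
    transpose_mul, transpose_transpose, zero_add, zero_add]

theorem PosDef.schur_complement₂₂ [Fintype m] [Fintype n] [CommRing R] [PartialOrder R]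
    [StarRing R] [DecidableEq n]
    {A : Matrix m m R} {B : Matrix m n R} {D : Matrix n n R} [Invertible D]
    (h : (fromBlocks A B Bᴴ D).PosDef) (hD : D.PosDef) :
    (A - B * D⁻¹ * Bᴴ).PosDef := by
  refine .of_dotProduct_mulVec_pos
    ((IsHermitian.fromBlocks₂₂ A B hD.isHermitian).mp h.isHermitian) fun x hx => ?_
  -- Test `h` on `(x, -D⁻¹ Bᴴ x)`, which kills the `D`-part of the Schur decomposition.
  have hv : Sum.elim x (-((D⁻¹ * Bᴴ) *ᵥ x)) ≠ 0 := fun h0 =>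
    hx (funext fun i => by simpa using congrFun h0 (Sum.inl i))
  have hpos := h.dotProduct_mulVec_pos hv
  rwa [dotProduct_mulVec, schur_complement_eq₂₂ A B x _ hD.isHermitian, add_neg_cancel,
    star_zero, zero_vecMul, zero_dotProduct, zero_add, ← dotProduct_mulVec] at hpos

theorem fromBlocks_mulVec_sumElim_of_schur [Fintype m] [Fintype n] [CommRing R]
    [DecidableEq n]
    {A : Matrix m m R} {B : Matrix m n R} {C : Matrix n m R} {D : Matrix n n R} [Invertible D]
    {θ p : m → R} {β q : n → R}
    (hθ : (A - B * D⁻¹ * C) *ᵥ θ = p - B *ᵥ (D⁻¹ *ᵥ q)) (hβ : β = D⁻¹ *ᵥ (q - C *ᵥ θ)) :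
    fromBlocks A B C D *ᵥ Sum.elim θ β = Sum.elim p q := by
  have hDβ : D *ᵥ β = q - C *ᵥ θ := by
    rw [hβ, mulVec_mulVec, mul_inv_of_invertible, one_mulVec]
  rw [fromBlocks_mulVec, Sum.elim_comp_inl, Sum.elim_comp_inr, hDβ, add_sub_cancel]
  congr 1
  rw [sub_mulVec, sub_eq_iff_eq_add, ← Matrix.mulVec_mulVec, ← Matrix.mulVec_mulVec] at hθ
  rw [hθ, hβ, mulVec_sub D⁻¹, mulVec_sub B]
  abel

end Matrix

/-- Block-matrix (Schur complement) identity underlying the parameter estimates of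
`CascadeHybrid`: the hybrid estimator `θ̂ = H⁻¹ u`, `β̂ = M⁻¹ (Zᵀy − Bᵀθ̂)` coincides with
the joint ridge-regression solution on the stacked feature matrix `Φ = [Ω Z]`. -/
theorem stmt0 (N d m : ℕ) (Ω : Matrix (Fin N) (Fin d) ℝ) (Z : Matrix (Fin N) (Fin m) ℝ)
    (y : Fin N → ℝ)
    (M : Matrix (Fin m) (Fin m) ℝ) (hM : M = 1 + Zᵀ * Z)
    (B : Matrix (Fin d) (Fin m) ℝ) (hB : B = Ωᵀ * Z)
    (H : Matrix (Fin d) (Fin d) ℝ) (hH : H = 1 + Ωᵀ * Ω - B * M⁻¹ * Bᵀ)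
    (u : Fin d → ℝ) (hu : u = Ωᵀ *ᵥ y - B *ᵥ (M⁻¹ *ᵥ (Zᵀ *ᵥ y)))
    (θ : Fin d → ℝ) (hθ : θ = H⁻¹ *ᵥ u)
    (β : Fin m → ℝ) (hβ : β = M⁻¹ *ᵥ (Zᵀ *ᵥ y - Bᵀ *ᵥ θ))
    (Φ : Matrix (Fin N) (Fin d ⊕ Fin m) ℝ) (hΦ : Φ = fromCols Ω Z) :
    M.PosDef ∧ H.PosDef ∧
      (1 + Φᵀ * Φ) *ᵥ (Sum.elim θ β) = Φᵀ *ᵥ y ∧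
      Sum.elim θ β = (1 + Φᵀ * Φ)⁻¹ *ᵥ (Φᵀ *ᵥ y) := by
  have hMpd : M.PosDef := hM ▸ posDef_one_add_conjTranspose_mul_self Z
  have hGram : (1 + Φᵀ * Φ).PosDef := posDef_one_add_conjTranspose_mul_self Φ
  have hblock : 1 + Φᵀ * Φ = fromBlocks (1 + Ωᵀ * Ω) B Bᵀ M := by
    rw [hΦ, one_add_transpose_fromCols_mul_fromCols, hB, hM]
  let := hMpd.isUnit.invertible
  have hHpd : H.PosDef := hH ▸ (hblock ▸ hGram).schur_complement₂₂ hMpd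
  let := hHpd.isUnit.invertible
  have hsolve : (1 + Φᵀ * Φ) *ᵥ Sum.elim θ β = Φᵀ *ᵥ y := by
    rw [hblock, hΦ, transpose_fromCols, fromRows_mulVec]
    refine fromBlocks_mulVec_sumElim_of_schur ?_ hβ
    rw [← hH, hθ, mulVec_mulVec, mul_inv_of_invertible, one_mulVec, hu]
  let := hGram.isUnit.invertible
  exact ⟨hMpd, hHpd, hsolve, (inv_mulVec_eq_vec hsolve.symm).symm⟩
end

section
/- Let K be a natural number and let κ_1, …, κ_K and u_1, …, u_K be real numbers with 0 ≤ κ_k ≤ u_k ≤ 1 for every k ∈ {1, …, K}. Then ∏_{k=1}^{K} (1 − κ_k) − ∏_{k=1}^{K} (1 − u_k) ≤ Σ_{k=1}^{K} (u_k − κ_k) · ∏_{i=1}^{k−1} (1 − κ_i). -/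
open Finset

theorem prod_range_sub_prod_range_le_sum {R : Type*} [CommRing R] [PartialOrder R]
    [IsOrderedRing R] (a b : ℕ → R) (n : ℕ)
    (hb₀ : ∀ k ∈ range n, 0 ≤ b k) (hba : ∀ k ∈ range n, b k ≤ a k)
    (hb₁ : ∀ k ∈ range n, b k ≤ 1) :
    ∏ k ∈ range n, a k - ∏ k ∈ range n, b k ≤
      ∑ k ∈ range n, (a k - b k) * ∏ i ∈ range k, a i := by
  induction n with
  | zero => simp
  | succ n ih =>
    have hsub : range n ⊆ range (n + 1) := range_subset_range.2 n.le_succ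
    have hn : n ∈ range (n + 1) := self_mem_range_succ n
    have hBA : ∏ k ∈ range n, b k ≤ ∏ k ∈ range n, a k :=
      prod_le_prod (fun k hk => hb₀ k (hsub hk)) fun k hk => hba k (hsub hk)
    have hgap : 0 ≤ (∏ k ∈ range n, a k - ∏ k ∈ range n, b k) * (1 - b n) :=
      mul_nonneg (sub_nonneg.2 hBA) (sub_nonneg.2 (hb₁ n hn))
    have ih' := ih (fun k hk => hb₀ k (hsub hk)) (fun k hk => hba k (hsub hk))
      fun k hk => hb₁ k (hsub hk)
    rw [prod_range_succ, prod_range_succ, sum_range_succ]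
    -- with `A = ∏ a ≥ B = ∏ b`, the new gap `A a - B b` is `(A - B) + (a - b) A - (A - B)(1 - b)`
    linear_combination ih' + hgap

/-- The gap between the cascade-model rewards computed from upper confidence bounds `u`
and true attraction probabilities `κ` is bounded by the sum of per-position gaps
weighted by the examination probabilities (items indexed `k = 0, …, K-1`). -/
theorem stmt3 (K : ℕ) (κ u : ℕ → ℝ)
    (h : ∀ k ∈ Finset.range K, 0 ≤ κ k ∧ κ k ≤ u k ∧ u k ≤ 1) :
    (∏ k ∈ Finset.range K, (1 - κ k)) - ∏ k ∈ Finset.range K, (1 - u k) ≤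
      ∑ k ∈ Finset.range K, (u k - κ k) * ∏ i ∈ Finset.range k, (1 - κ i) := by
  have key := prod_range_sub_prod_range_le_sum (fun k => 1 - κ k) (fun k => 1 - u k) K
    (fun k hk => sub_nonneg.2 (h k hk).2.2) (fun k hk => sub_le_sub_left (h k hk).2.1 1)
    fun k hk => by linarith [(h k hk).1, (h k hk).2.1]
  simpa only [sub_sub_sub_cancel_left] using key
end

section
/- Let D and N be natural numbers and let v_1, …, v_N ∈ ℝ^D be vectors with Euclidean norm ‖v_t‖ ≤ 1 for all t. Define the D×D matrices V_1 = I_D and V_{t+1} = V_t + v_t v_tᵀ for t = 1, …, N. Then Σ_{t=1}^{N} v_tᵀ V_t⁻¹ v_t ≤ 2 · log(det(V_{N+1})). -/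
open Matrix

lemma outer_psd (D : ℕ) (v : Fin D → ℝ) : (vecMulVec v v).PosSemidef := by
  have h : vecMulVec v v = (replicateRow Unit v)ᴴ * (replicateRow Unit v) := by
    rw [conjTranspose_replicateRow, star_trivial, ← vecMulVec_eq]
  rw [h]; exact posSemidef_conjTranspose_mul_self _

lemma det_factor (D : ℕ) (A : Matrix (Fin D) (Fin D) ℝ) (u : Fin D → ℝ) :
    (1 + replicateRow Unit u * A⁻¹ * replicateCol Unit u).det = 1 + u ⬝ᵥ (A⁻¹ *ᵥ u) := by
  simp only [Matrix.det_unique, Matrix.add_apply, Matrix.one_apply_eq, Matrix.mul_apply,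
    Matrix.replicateRow_apply, Matrix.replicateCol_apply, dotProduct, Matrix.mulVec, Finset.mul_sum,
    Finset.sum_mul, Finset.univ_unique, Finset.sum_singleton]
  rw [Finset.sum_comm]
  simp [mul_assoc]

lemma half_le_log (w : ℝ) (h0 : 0 ≤ w) (h1 : w ≤ 1) : w ≤ 2 * Real.log (1 + w) := by
  have hp : (0:ℝ) < 1 + w := by linarith
  have h2 : Real.log (1 + w)⁻¹ ≤ (1 + w)⁻¹ - 1 :=
    Real.log_le_sub_one_of_pos (by positivity)
  rw [Real.log_inv] at h2
  have hmul : (1 + w)⁻¹ * (1 + w) = 1 := inv_mul_cancel₀ hp.ne'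
  nlinarith [h2, hmul, mul_nonneg h0 h0]

/-- Elliptical potential bound: for feature vectors `v 0, …, v (N-1)` of Euclidean norm
at most `1` and regularized Gram matrices `V 0 = I`, `V (t+1) = V t + v t (v t)ᵀ`, the
sum of squared confidence widths is at most `2 log det (V N)`. -/
theorem stmt12 (D N : ℕ) (v : ℕ → Fin D → ℝ)
    (hv : ∀ t < N, Real.sqrt (v t ⬝ᵥ v t) ≤ 1)
    (V : ℕ → Matrix (Fin D) (Fin D) ℝ)
    (hV0 : V 0 = 1)
    (hVs : ∀ t < N, V (t + 1) = V t + vecMulVec (v t) (v t)) :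
    ∑ t ∈ Finset.range N, v t ⬝ᵥ ((V t)⁻¹ *ᵥ v t) ≤ 2 * Real.log (V N).det := by
  suffices h : ∀ n, n ≤ N → (V n - 1).PosSemidef ∧
      ∑ t ∈ Finset.range n, v t ⬝ᵥ ((V t)⁻¹ *ᵥ v t) ≤ 2 * Real.log (V n).det by
    exact (h N le_rfl).2
  intro n
  induction n with
  | zero =>
    intro _
    constructor
    · rw [hV0]; simpa using (Matrix.PosSemidef.zero : (0 : Matrix (Fin D) (Fin D) ℝ).PosSemidef)
    · simp [hV0]
  | succ k ih =>
    intro hk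
    obtain ⟨hS, hsum⟩ := ih (le_of_lt hk)
    have hkN : k < N := hk
    set A := V k with hAdef
    -- A is positive definite
    have hA : A.PosDef := by
      have h1 : A = 1 + (A - 1) := by abel
      rw [h1]
      exact Matrix.PosDef.one.add_posSemidef hS
    have hAunit : IsUnit A.det := hA.det_pos.ne'.isUnit
    have hAinv : A⁻¹.PosDef := hA.inv
    set w := v k ⬝ᵥ (A⁻¹ *ᵥ v k) with hwdef
    -- w is nonnegative
    have hw0 : 0 ≤ w := by
      have := hAinv.posSemidef.dotProduct_mulVec_nonneg (v k)
      simpa using this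
    -- v k ⬝ᵥ v k ≤ 1
    have hvv0 : 0 ≤ v k ⬝ᵥ v k := Finset.sum_nonneg fun i _ => mul_self_nonneg (v k i)
    have hvv1 : v k ⬝ᵥ v k ≤ 1 := by
      have hs := hv k hkN
      have := Real.sq_sqrt hvv0
      nlinarith [Real.sqrt_nonneg (v k ⬝ᵥ v k)]
    -- w ≤ 1
    have hu : A *ᵥ (A⁻¹ *ᵥ v k) = v k := by
      rw [mulVec_mulVec, Matrix.mul_nonsing_inv A hAunit, one_mulVec]
    set u := A⁻¹ *ᵥ v k with hudef
    have hsym : Aᵀ = A := by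
      have := hA.isHermitian
      simpa [Matrix.IsHermitian, conjTranspose_eq_transpose_of_trivial] using this
    have hdot : ∀ z : Fin D → ℝ, u ⬝ᵥ (Aᵀ *ᵥ z) = (A *ᵥ u) ⬝ᵥ z := by
      intro z
      rw [Matrix.dotProduct_mulVec, Matrix.vecMul_transpose]
    have hw1 : w ≤ 1 := by
      have hAH : (A - 1)ᴴ = A - 1 := hA.isHermitian.sub Matrix.isHermitian_one
      have key : v k ⬝ᵥ v k - w = u ⬝ᵥ (((A - 1)ᴴ * (A - 1) + (A - 1)) *ᵥ u) := by
        have e1 : v k ⬝ᵥ v k = u ⬝ᵥ (Aᵀ *ᵥ (A *ᵥ u)) := by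
          rw [hdot, hu]
        have e2 : w = u ⬝ᵥ (Aᵀ *ᵥ u) := by
          rw [hdot, hu, hwdef, hudef, dotProduct_comm]
        rw [e1, e2, hsym, hAH]
        simp only [Matrix.sub_mul, Matrix.mul_sub, Matrix.one_mul, Matrix.mul_one,
          sub_mulVec, mulVec_sub, one_mulVec, add_mulVec, dotProduct_add, dotProduct_sub,
          ← mulVec_mulVec]
        ring
      have hpsd : (((A - 1)ᴴ * (A - 1) + (A - 1))).PosSemidef :=
        (posSemidef_conjTranspose_mul_self (A - 1)).add hS
      have hnn := hpsd.dotProduct_mulVec_nonneg u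
      simp only [star_trivial] at hnn
      linarith [key ▸ hnn, hvv1]
    -- determinant recursion
    have hdet : (V (k + 1)).det = A.det * (1 + w) := by
      rw [hVs k hkN, ← hAdef, vecMulVec_eq Unit, Matrix.det_add_replicateCol_mul_replicateRow hAunit,
        det_factor]
    have hdetA : 0 < A.det := hA.det_pos
    have hwpos : (0:ℝ) < 1 + w := by linarith
    -- positive semidefiniteness of V (k+1) - 1
    have hS' : (V (k + 1) - 1).PosSemidef := by
      have : V (k + 1) - 1 = (A - 1) + vecMulVec (v k) (v k) := by
        rw [hVs k hkN, ← hAdef]; abel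
      rw [this]
      exact hS.add (outer_psd D (v k))
    refine ⟨hS', ?_⟩
    rw [Finset.sum_range_succ, hdet, Real.log_mul hdetA.ne' hwpos.ne']
    have hlog := half_le_log w hw0 hw1
    have : (v k ⬝ᵥ ((V k)⁻¹ *ᵥ v k)) = w := rfl
    rw [this]
    linarith
end

section
/- Let D and N be natural numbers with D ≥ 1 and let v_1, …, v_N ∈ ℝ^D be vectors with Euclidean norm ‖v_t‖ ≤ 1 for all t. Define V_1 = I_D and V_{t+1} = V_t + v_t v_tᵀ for t = 1, …, N. Then Σ_{t=1}^{N} √(v_tᵀ V_t⁻¹ v_t) ≤ √(2 · N · D · log(1 + N/D)). -/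
open Matrix

section AuxStmt14

variable {n : Type*} [Fintype n] [DecidableEq n]

lemma aux14_dot_vecMulVec (u x : n → ℝ) : x ⬝ᵥ (vecMulVec u u *ᵥ x) = (u ⬝ᵥ x) ^ 2 := by
  simp only [mulVec, dotProduct, vecMulVec_apply, sq]
  rw [Finset.sum_mul_sum]
  exact Finset.sum_congr rfl fun i _ => by
    rw [Finset.mul_sum]
    exact Finset.sum_congr rfl fun j _ => by ring

lemma aux14_psd_vecMulVec (u : n → ℝ) : (vecMulVec u u).PosSemidef := by
  refine .of_dotProduct_mulVec_nonneg ?_ fun x => ?_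
  · ext i j
    simp [vecMulVec_apply, conjTranspose_apply, mul_comm]
  · simp only [star_trivial, RCLike.re_to_real]
    rw [aux14_dot_vecMulVec]
    positivity

lemma aux14_q_nonneg {A : Matrix n n ℝ} (hA : A.PosDef) (u : n → ℝ) :
    0 ≤ u ⬝ᵥ (A⁻¹ *ᵥ u) := by
  have := hA.inv.posSemidef.dotProduct_mulVec_nonneg u
  simpa using this

lemma aux14_q_le {A : Matrix n n ℝ} (hA : A.PosDef)
    (hge : ∀ x : n → ℝ, x ⬝ᵥ x ≤ x ⬝ᵥ (A *ᵥ x)) (u : n → ℝ) :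
    u ⬝ᵥ (A⁻¹ *ᵥ u) ≤ u ⬝ᵥ u := by
  have hAw : A *ᵥ (A⁻¹ *ᵥ u) = u := by
    rw [mulVec_mulVec, Matrix.mul_nonsing_inv _ hA.det_pos.ne'.isUnit, one_mulVec]
  have h1 : (A⁻¹ *ᵥ u) ⬝ᵥ (A⁻¹ *ᵥ u) ≤ u ⬝ᵥ (A⁻¹ *ᵥ u) := by
    have h := hge (A⁻¹ *ᵥ u)
    rw [hAw] at h
    calc (A⁻¹ *ᵥ u) ⬝ᵥ (A⁻¹ *ᵥ u) ≤ (A⁻¹ *ᵥ u) ⬝ᵥ u := h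
      _ = u ⬝ᵥ (A⁻¹ *ᵥ u) := dotProduct_comm _ _
  have h2 : (u ⬝ᵥ (A⁻¹ *ᵥ u)) ^ 2 ≤ (u ⬝ᵥ u) * ((A⁻¹ *ᵥ u) ⬝ᵥ (A⁻¹ *ᵥ u)) := by
    simpa [dotProduct, sq] using Finset.sum_mul_sq_le_sq_mul_sq Finset.univ u (A⁻¹ *ᵥ u)
  have hww : 0 ≤ (A⁻¹ *ᵥ u) ⬝ᵥ (A⁻¹ *ᵥ u) := Finset.sum_nonneg fun i _ => mul_self_nonneg _
  have huu : 0 ≤ u ⬝ᵥ u := Finset.sum_nonneg fun i _ => mul_self_nonneg _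
  nlinarith [h1, h2, hww, huu]

lemma aux14_det_step {A : Matrix n n ℝ} (hA : A.PosDef) (u : n → ℝ) :
    det (A + vecMulVec u u) = det A * (1 + u ⬝ᵥ (A⁻¹ *ᵥ u)) := by
  rw [vecMulVec_eq Unit, det_add_replicateCol_mul_replicateRow hA.det_pos.ne'.isUnit]
  congr 1
  have key : (replicateRow Unit u * A⁻¹ * replicateCol Unit u) default default = u ⬝ᵥ (A⁻¹ *ᵥ u) := by
    simp only [Matrix.mul_apply, Matrix.replicateRow_apply, Matrix.replicateCol_apply, mulVec, dotProduct,
      Finset.sum_mul, Finset.mul_sum]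
    rw [Finset.sum_comm]
    exact Finset.sum_congr rfl fun i _ => Finset.sum_congr rfl fun j _ => by ring
  rw [det_unique, Matrix.add_apply, Matrix.one_apply_eq, key]

lemma aux14_two_log_lb {q : ℝ} (h0 : 0 ≤ q) (h1 : q ≤ 1) : q ≤ 2 * Real.log (1 + q) := by
  have hq2 : (0:ℝ) < 1 - q / 2 := by linarith
  have he : Real.exp (q / 2) ≤ 1 + q := by
    have hexp : 1 - q / 2 ≤ Real.exp (-(q / 2)) := by
      have := Real.add_one_le_exp (-(q / 2)); linarith
    have h3 : Real.exp (q / 2) * (1 - q / 2) ≤ 1 := by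
      calc Real.exp (q / 2) * (1 - q / 2) ≤ Real.exp (q / 2) * Real.exp (-(q / 2)) :=
            mul_le_mul_of_nonneg_left hexp (Real.exp_pos _).le
        _ = 1 := by rw [← Real.exp_add]; simp
    nlinarith [Real.exp_pos (q / 2)]
  have := (Real.le_log_iff_exp_le (by linarith : (0:ℝ) < 1 + q)).2 he
  linarith

lemma aux14_trace_eq_sum_eig {A : Matrix n n ℝ} (hA : A.IsHermitian) :
    A.trace = ∑ i, hA.eigenvalues i := by
  simpa using hA.trace_eq_sum_eigenvalues

lemma aux14_logdet_le {D : ℕ} (hD : 1 ≤ D) {M : Matrix (Fin D) (Fin D) ℝ} (hM : M.PosDef) :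
    Real.log M.det ≤ D * Real.log (M.trace / D) := by
  have hDpos : (0:ℝ) < D := by exact_mod_cast hD
  have hμpos : ∀ i, 0 < hM.1.eigenvalues i := hM.eigenvalues_pos
  have hdet : M.det = ∏ i, hM.1.eigenvalues i := by simpa using hM.1.det_eq_prod_eigenvalues
  have htr : M.trace = ∑ i, hM.1.eigenvalues i := aux14_trace_eq_sum_eig hM.1
  have hlog : Real.log M.det = ∑ i, Real.log (hM.1.eigenvalues i) := by
    rw [hdet, Real.log_prod fun i _ => (hμpos i).ne']
  have jensen := (strictConcaveOn_log_Ioi.concaveOn).le_map_sum (t := Finset.univ)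
      (w := fun _ : Fin D => (D:ℝ)⁻¹) (p := hM.1.eigenvalues)
      (fun i _ => by positivity)
      (by simp [Finset.card_univ]; field_simp)
      (fun i _ => Set.mem_Ioi.2 (hμpos i))
  simp only [smul_eq_mul, ← Finset.mul_sum] at jensen
  have h2 : Real.log ((D:ℝ)⁻¹ * ∑ i, hM.1.eigenvalues i) = Real.log (M.trace / D) := by
    rw [htr]; ring_nf
  rw [hlog]
  calc (∑ i, Real.log (hM.1.eigenvalues i))
      = D * ((D:ℝ)⁻¹ * ∑ i, Real.log (hM.1.eigenvalues i)) := by field_simp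
    _ ≤ D * Real.log (M.trace / D) := by
        apply mul_le_mul_of_nonneg_left _ hDpos.le
        rw [← h2]; exact jensen

lemma aux14_trace_vecMulVec (u : n → ℝ) : (vecMulVec u u).trace = u ⬝ᵥ u := by
  simp [Matrix.trace, Matrix.diag, vecMulVec_apply, dotProduct]

end AuxStmt14

/-- Total confidence-width bound giving the `√N` scaling of the regret of
`CascadeHybrid`: with `V 0 = I` and `V (t+1) = V t + v t (v t)ᵀ`,
`∑ t √(v tᵀ (V t)⁻¹ v t) ≤ √(2 N D log (1 + N / D))`. -/
theorem stmt14 (D N : ℕ) (hD : 1 ≤ D) (v : ℕ → Fin D → ℝ)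
    (hv : ∀ t < N, Real.sqrt (v t ⬝ᵥ v t) ≤ 1)
    (V : ℕ → Matrix (Fin D) (Fin D) ℝ)
    (hV0 : V 0 = 1)
    (hVs : ∀ t < N, V (t + 1) = V t + vecMulVec (v t) (v t)) :
    ∑ t ∈ Finset.range N, Real.sqrt (v t ⬝ᵥ ((V t)⁻¹ *ᵥ v t)) ≤
      Real.sqrt (2 * N * D * Real.log (1 + (N : ℝ) / D)) := by
  have hD' : (0:ℝ) < D := by exact_mod_cast hD
  -- the matrices stay positive definite and `≥ 1`
  have hinv : ∀ t, t ≤ N → (V t).PosDef ∧ ∀ x : Fin D → ℝ, x ⬝ᵥ x ≤ x ⬝ᵥ (V t *ᵥ x) := by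
    intro t
    induction t with
    | zero =>
      intro _
      rw [hV0]
      exact ⟨Matrix.PosDef.one, fun x => by rw [one_mulVec]⟩
    | succ t ih =>
      intro ht
      have htN : t < N := lt_of_lt_of_le (Nat.lt_succ_self t) ht
      obtain ⟨hpd, hge⟩ := ih htN.le
      rw [hVs t htN]
      refine ⟨hpd.add_posSemidef (aux14_psd_vecMulVec _), fun x => ?_⟩
      rw [add_mulVec, dotProduct_add, aux14_dot_vecMulVec]
      nlinarith [hge x, sq_nonneg (v t ⬝ᵥ x)]
  have hq0 : ∀ t < N, 0 ≤ v t ⬝ᵥ ((V t)⁻¹ *ᵥ v t) := fun t ht =>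
    aux14_q_nonneg (hinv t ht.le).1 _
  have hvv0 : ∀ t, 0 ≤ v t ⬝ᵥ v t := fun t => Finset.sum_nonneg fun i _ => mul_self_nonneg _
  have hvv1 : ∀ t < N, v t ⬝ᵥ v t ≤ 1 := by
    intro t ht
    nlinarith [Real.sq_sqrt (hvv0 t), hv t ht, Real.sqrt_nonneg (v t ⬝ᵥ v t)]
  have hq1 : ∀ t < N, v t ⬝ᵥ ((V t)⁻¹ *ᵥ v t) ≤ 1 := fun t ht =>
    le_trans (aux14_q_le (hinv t ht.le).1 (hinv t ht.le).2 _) (hvv1 t ht)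
  -- telescoping the log-determinants
  have hdetpos : ∀ t, t ≤ N → 0 < det (V t) := fun t ht => (hinv t ht).1.det_pos
  have hstep : ∀ t < N, Real.log (det (V (t+1))) - Real.log (det (V t))
      = Real.log (1 + v t ⬝ᵥ ((V t)⁻¹ *ᵥ v t)) := by
    intro t ht
    rw [hVs t ht, aux14_det_step (hinv t ht.le).1,
      Real.log_mul (hdetpos t ht.le).ne' (by nlinarith [hq0 t ht])]
    ring
  have htel : ∑ t ∈ Finset.range N, Real.log (1 + v t ⬝ᵥ ((V t)⁻¹ *ᵥ v t))
      = Real.log (det (V N)) := by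
    calc ∑ t ∈ Finset.range N, Real.log (1 + v t ⬝ᵥ ((V t)⁻¹ *ᵥ v t))
        = ∑ t ∈ Finset.range N,
            (Real.log (det (V (t+1))) - Real.log (det (V t))) :=
          Finset.sum_congr rfl fun t ht => (hstep t (Finset.mem_range.1 ht)).symm
      _ = Real.log (det (V N)) - Real.log (det (V 0)) :=
          Finset.sum_range_sub (fun t => Real.log (det (V t))) N
      _ = Real.log (det (V N)) := by rw [hV0]; simp
  -- trace bound
  have htrace : ∀ t, t ≤ N → (V t).trace ≤ (D:ℝ) + t := by
    intro t
    induction t with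
    | zero =>
      intro _
      rw [hV0, Matrix.trace_one]
      simp
    | succ t ih =>
      intro ht
      have htN : t < N := lt_of_lt_of_le (Nat.lt_succ_self t) ht
      rw [hVs t htN, Matrix.trace_add, aux14_trace_vecMulVec]
      have h1 := ih htN.le
      have h2 := hvv1 t htN
      push_cast
      linarith
  have htrpos : 0 < (V N).trace := by
    rw [aux14_trace_eq_sum_eig (hinv N le_rfl).1.1]
    exact Finset.sum_pos (fun i _ => (hinv N le_rfl).1.eigenvalues_pos i)
      ⟨⟨0, hD⟩, Finset.mem_univ _⟩
  have hlogdet : Real.log (det (V N)) ≤ D * Real.log (1 + (N:ℝ)/D) := by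
    have h1 := aux14_logdet_le hD (hinv N le_rfl).1
    have heq : (1:ℝ) + (N:ℝ)/D = ((D:ℝ) + N)/D := by field_simp
    have h2 : Real.log ((V N).trace / D) ≤ Real.log (1 + (N:ℝ)/D) := by
      rw [heq]
      exact Real.log_le_log (by positivity) ((div_le_div_iff_of_pos_right hD').2 (htrace N le_rfl))
    calc Real.log (det (V N)) ≤ D * Real.log ((V N).trace / D) := h1
      _ ≤ D * Real.log (1 + (N:ℝ)/D) := mul_le_mul_of_nonneg_left h2 hD'.le
  -- sum of the q's
  have hsumq : ∑ t ∈ Finset.range N, (v t ⬝ᵥ ((V t)⁻¹ *ᵥ v t))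
      ≤ 2 * ((D:ℝ) * Real.log (1 + (N:ℝ)/D)) := by
    calc ∑ t ∈ Finset.range N, (v t ⬝ᵥ ((V t)⁻¹ *ᵥ v t))
        ≤ ∑ t ∈ Finset.range N, 2 * Real.log (1 + v t ⬝ᵥ ((V t)⁻¹ *ᵥ v t)) :=
          Finset.sum_le_sum fun t ht =>
            aux14_two_log_lb (hq0 t (Finset.mem_range.1 ht)) (hq1 t (Finset.mem_range.1 ht))
      _ = 2 * ∑ t ∈ Finset.range N, Real.log (1 + v t ⬝ᵥ ((V t)⁻¹ *ᵥ v t)) := by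
          rw [Finset.mul_sum]
      _ = 2 * Real.log (det (V N)) := by rw [htel]
      _ ≤ 2 * ((D:ℝ) * Real.log (1 + (N:ℝ)/D)) := by linarith [hlogdet]
  -- Cauchy–Schwarz
  have hcs : (∑ t ∈ Finset.range N, Real.sqrt (v t ⬝ᵥ ((V t)⁻¹ *ᵥ v t))) ^ 2
      ≤ (N:ℝ) * ∑ t ∈ Finset.range N, (v t ⬝ᵥ ((V t)⁻¹ *ᵥ v t)) := by
    have h := sq_sum_le_card_mul_sum_sq (s := Finset.range N)
      (f := fun t => Real.sqrt (v t ⬝ᵥ ((V t)⁻¹ *ᵥ v t)))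
    have hsq : ∑ t ∈ Finset.range N, (Real.sqrt (v t ⬝ᵥ ((V t)⁻¹ *ᵥ v t))) ^ 2
        = ∑ t ∈ Finset.range N, (v t ⬝ᵥ ((V t)⁻¹ *ᵥ v t)) :=
      Finset.sum_congr rfl fun t ht => Real.sq_sqrt (hq0 t (Finset.mem_range.1 ht))
    rw [hsq] at h
    simpa using h
  have hnonneg : 0 ≤ ∑ t ∈ Finset.range N, Real.sqrt (v t ⬝ᵥ ((V t)⁻¹ *ᵥ v t)) :=
    Finset.sum_nonneg fun t _ => Real.sqrt_nonneg _
  have hfinal : (∑ t ∈ Finset.range N, Real.sqrt (v t ⬝ᵥ ((V t)⁻¹ *ᵥ v t))) ^ 2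
      ≤ 2 * N * D * Real.log (1 + (N:ℝ)/D) := by
    have hN : (0:ℝ) ≤ N := Nat.cast_nonneg N
    nlinarith [hcs, hsumq, mul_le_mul_of_nonneg_left hsumq hN]
  calc ∑ t ∈ Finset.range N, Real.sqrt (v t ⬝ᵥ ((V t)⁻¹ *ᵥ v t))
      = Real.sqrt ((∑ t ∈ Finset.range N, Real.sqrt (v t ⬝ᵥ ((V t)⁻¹ *ᵥ v t))) ^ 2) :=
        (Real.sqrt_sq hnonneg).symm
    _ ≤ Real.sqrt (2 * N * D * Real.log (1 + (N:ℝ)/D)) := Real.sqrt_le_sqrt hfinal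
end
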